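/- arXiv:1608.07860 — 6 statements merged into one kernel-verified Lean document; each statement's English description precedes it below -/
import Mathlib

section
/- Let f be a measurable function on ℝ such that Δ(x) = f(x + π/2) − f(x) is in L²(ℝ) and x ↦ f(x)·sin(x) is in L²(ℝ). Then f ∈ L²(ℝ). -/
/-!
Since `sin (x + π / 2) = cos x`, the identity
`f x * cos x = f (x + π / 2) * sin (x + π / 2) - (f (x + π / 2) - f x) * cos x`
writes `f * cos` as a translate of `f * sin` minus a bounded multiple of the difference, so
`f * cos ∈ L²`. Then `f = (f * sin) * sin + (f * cos) * cos` is in `L²` as well.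
-/

open Real MeasureTheory ENNReal

namespace MeasureTheory.MemLp

variable {μ : Measure ℝ} {p : ℝ≥0∞} {f : ℝ → ℝ}

theorem mul_sin (hf : MemLp f p μ) : MemLp (fun x => f x * sin x) p μ := by
  have hsin : MemLp sin ∞ μ :=
    memLp_top_of_bound continuous_sin.aestronglyMeasurable 1
      (.of_forall fun x => by simpa using abs_sin_le_one x)
  simpa only [mul_comm] using hf.mul' hsin

theorem mul_cos (hf : MemLp f p μ) : MemLp (fun x => f x * cos x) p μ := by
  have hcos : MemLp cos ∞ μ :=
    memLp_top_of_bound continuous_cos.aestronglyMeasurable 1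
      (.of_forall fun x => by simpa using abs_cos_le_one x)
  simpa only [mul_comm] using hf.mul' hcos

theorem of_mul_sin_of_mul_cos (hs : MemLp (fun x => f x * sin x) p μ)
    (hc : MemLp (fun x => f x * cos x) p μ) : MemLp f p μ := by
  convert hs.mul_sin.add hc.mul_cos using 1
  funext x
  simp only [Pi.add_apply]
  linear_combination -f x * sin_sq_add_cos_sq x

theorem mul_cos_of_sub_shift [μ.IsAddRightInvariant]
    (hΔ : MemLp (fun x => f (x + π / 2) - f x) p μ) (hs : MemLp (fun x => f x * sin x) p μ) :
    MemLp (fun x => f x * cos x) p μ := by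
  have hshift : MemLp (fun x => f (x + π / 2) * cos x) p μ := by
    simpa only [Function.comp_def, sin_add_pi_div_two] using
      hs.comp_measurePreserving (measurePreserving_add_right μ (π / 2))
  convert hshift.sub hΔ.mul_cos using 1
  funext x
  simp only [Pi.sub_apply]
  ring

end MeasureTheory.MemLp

theorem shifts_sine_L2_general (f : ℝ → ℝ)
    (hΔ : MemLp (fun x => f (x + π / 2) - f x) 2 volume)
    (hs : MemLp (fun x => f x * Real.sin x) 2 volume) :
    MemLp f 2 volume :=
  .of_mul_sin_of_mul_cos hs (.mul_cos_of_sub_shift hΔ hs)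

theorem shifts_sine_L2 (f : ℝ → ℝ) (hf : Measurable f)
    (hΔ : MemLp (fun x => f (x + π / 2) - f x) 2 volume)
    (hs : MemLp (fun x => f x * Real.sin x) 2 volume) :
    MemLp f 2 volume :=
  shifts_sine_L2_general f hΔ hs
end

section
/- Let 1 ≤ p < ∞ and let T, t, s be real numbers with t·s = T and T ∉ πℤ. If f is measurable on ℝ with f(·+t) − f(·) ∈ Lᵖ(ℝ) and (sin(s·))·f(·) ∈ Lᵖ(ℝ), then f ∈ Lᵖ(ℝ). -/
open Real MeasureTheory
open scoped ENNReal

/-!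
Multiplying by the bounded functions `sin (s * ·)`, `cos (s * ·)` and translating both preserve
`Lᵖ`. Since `f (· + t) - f ∈ Lᵖ`, also `sin (s * ·) * f (· + t) ∈ Lᵖ`, and the translate of
`sin (s * ·) * f` is `sin (s * · + s * t) * f (· + t)
= cos (s * t) * sin (s * ·) * f (· + t) + sin (s * t) * cos (s * ·) * f (· + t)`.
As `sin (s * t) ≠ 0`, this puts `cos (s * ·) * f (· + t)`, hence `cos (s * ·) * f`, in `Lᵖ`,
and `f = sin (s * ·) * (sin (s * ·) * f) + cos (s * ·) * (cos (s * ·) * f)`.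
-/

section BoundedMultiplier

variable {α : Type*} [MeasurableSpace α] {μ : Measure α} {p : ℝ≥0∞} {θ h : α → ℝ}

lemma MeasureTheory.MemLp.sin_mul (hθ : Measurable θ) (hh : MemLp h p μ) :
    MemLp (fun x => sin (θ x) * h x) p μ :=
  hh.mul' (memLp_top_of_bound (measurable_sin.comp hθ).aestronglyMeasurable 1
    (.of_forall fun x => by simpa using abs_sin_le_one (θ x)))

lemma MeasureTheory.MemLp.cos_mul (hθ : Measurable θ) (hh : MemLp h p μ) :
    MemLp (fun x => cos (θ x) * h x) p μ :=
  hh.mul' (memLp_top_of_bound (measurable_cos.comp hθ).aestronglyMeasurable 1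
    (.of_forall fun x => by simpa using abs_cos_le_one (θ x)))

lemma memLp_of_memLp_sin_mul_of_memLp_cos_mul (hθ : Measurable θ)
    (hsin : MemLp (fun x => sin (θ x) * h x) p μ) (hcos : MemLp (fun x => cos (θ x) * h x) p μ) :
    MemLp h p μ := by
  convert (hsin.sin_mul hθ).add (hcos.cos_mul hθ) using 1
  ext x
  simp only [Pi.add_apply]
  linear_combination (-h x) * sin_sq_add_cos_sq (θ x)

end BoundedMultiplier

section Shift

variable {p : ℝ≥0∞} {f : ℝ → ℝ} {s t : ℝ}

lemma memLp_sin_mul_comp_add_right (hΔ : MemLp (fun x => f (x + t) - f x) p volume)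
    (hsin : MemLp (fun x => sin (s * x) * f x) p volume) :
    MemLp (fun x => sin (s * x) * f (x + t)) p volume := by
  convert hsin.add (hΔ.sin_mul (measurable_const_mul s)) using 1
  ext x
  simp only [Pi.add_apply]
  ring

lemma memLp_cos_mul_comp_add_right (hst : sin (s * t) ≠ 0)
    (hΔ : MemLp (fun x => f (x + t) - f x) p volume)
    (hsin : MemLp (fun x => sin (s * x) * f x) p volume) :
    MemLp (fun x => cos (s * x) * f (x + t)) p volume := by
  have htrans : MemLp (fun x => sin (s * (x + t)) * f (x + t)) p volume :=
    hsin.comp_measurePreserving (measurePreserving_add_right volume t)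
  convert (htrans.const_mul (sin (s * t))⁻¹).sub
    ((memLp_sin_mul_comp_add_right hΔ hsin).const_mul (cos (s * t) / sin (s * t))) using 1
  ext x
  simp only [Pi.sub_apply]
  rw [mul_add, sin_add]
  field_simp
  ring

lemma memLp_cos_mul (hst : sin (s * t) ≠ 0)
    (hΔ : MemLp (fun x => f (x + t) - f x) p volume)
    (hsin : MemLp (fun x => sin (s * x) * f x) p volume) :
    MemLp (fun x => cos (s * x) * f x) p volume := by
  convert (memLp_cos_mul_comp_add_right hst hΔ hsin).sub
    (hΔ.cos_mul (measurable_const_mul s)) using 1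
  ext x
  simp only [Pi.sub_apply]
  ring

end Shift

theorem shifts_sine_Lp_general_general (p : ℝ) (t s T : ℝ)
    (hT : t * s = T) (hTpi : ∀ k : ℤ, T ≠ k * π)
    (f : ℝ → ℝ)
    (hΔ : MemLp (fun x => f (x + t) - f x) (ENNReal.ofReal p) volume)
    (hsin : MemLp (fun x => Real.sin (s * x) * f x) (ENNReal.ofReal p) volume) :
    MemLp f (ENNReal.ofReal p) volume := by
  have hst : sin (s * t) ≠ 0 := by
    rw [mul_comm, hT]
    exact sin_ne_zero_iff.2 fun k => (hTpi k).symm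
  exact memLp_of_memLp_sin_mul_of_memLp_cos_mul (measurable_const_mul s) hsin
    (memLp_cos_mul hst hΔ hsin)

theorem shifts_sine_Lp_general (p : ℝ) (hp : 1 ≤ p) (t s T : ℝ)
    (ht : t ≠ 0) (hs : s ≠ 0) (hT : t * s = T) (hTpi : ∀ k : ℤ, T ≠ k * π)
    (f : ℝ → ℝ) (hf : Measurable f)
    (hΔ : MemLp (fun x => f (x + t) - f x) (ENNReal.ofReal p) volume)
    (hsin : MemLp (fun x => Real.sin (s * x) * f x) (ENNReal.ofReal p) volume) :
    MemLp f (ENNReal.ofReal p) volume :=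
  shifts_sine_Lp_general_general p t s T hT hTpi f hΔ hsin
end

section
/- Define f : ℝ → ℝ by f(x) = 1 if x ∈ ⋃_{k∈ℤ} [kπ, kπ + a_k] and f(x) = 0 otherwise, where a₀ = 1/4 and a_k = 1/(5|k|) for k ≠ 0. Then the function g(x) = f(x)·sin(x) satisfies ∫_ℝ |g(x)|² dx ≤ (1/3)·∑_{k∈ℤ} a_k³ < ∞, so g ∈ L²(ℝ). -/
open Real MeasureTheory

noncomputable def aSeq (k : ℤ) : ℝ := if k = 0 then 1 / 4 else 1 / (5 * |(k : ℝ)|)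

noncomputable def fCtr : ℝ → ℝ :=
  Set.indicator (⋃ k : ℤ, Set.Icc ((k : ℝ) * π) ((k : ℝ) * π + aSeq k)) 1

/-! On `[kπ, kπ + a_k]` we have `sin² x = sin² (x - kπ) ≤ (x - kπ)²`, whose integral is `a_k³ / 3`;
countable subadditivity of the integral over the union of these intervals gives the bound, and
`a_k³ ≤ |k|⁻³` for `k ≠ 0` makes it finite. -/

open Set Filter

lemma memLp_two_of_lintegral_sq_abs_ne_top {α : Type*} [MeasurableSpace α] {μ : Measure α}
    {f : α → ℝ} (hf : AEStronglyMeasurable f μ)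
    (h : ∫⁻ x, ENNReal.ofReal (|f x| ^ 2) ∂μ ≠ ⊤) : MemLp f 2 μ := by
  rw [memLp_two_iff_integrable_sq hf]
  refine ⟨hf.pow 2, ?_⟩
  rw [hasFiniteIntegral_iff_ofReal (ae_of_all _ fun x => sq_nonneg (f x))]
  simpa only [sq_abs] using h.lt_top

namespace Real

lemma sin_sq_le_sq_sub_int_mul_pi (k : ℤ) (x : ℝ) : sin x ^ 2 ≤ (x - k * π) ^ 2 := by
  calc sin x ^ 2 = sin (x - k * π) ^ 2 := by
        rw [sin_sub_int_mul_pi, mul_pow, ← sq_abs ((-1 : ℝ) ^ k), abs_neg_one_zpow, one_pow,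
          one_mul]
    _ ≤ (x - k * π) ^ 2 := sin_sq_le_sq

end Real

lemma lintegral_Icc_ofReal_sq_sub (c : ℝ) {a : ℝ} (ha : 0 ≤ a) :
    ∫⁻ x in Icc c (c + a), ENNReal.ofReal ((x - c) ^ 2) = ENNReal.ofReal (a ^ 3 / 3) := by
  rw [← ofReal_integral_eq_lintegral_ofReal
      (by fun_prop : Continuous fun x : ℝ => (x - c) ^ 2).integrableOn_Icc
      (ae_of_all _ fun x => sq_nonneg _),
    integral_Icc_eq_integral_Ioc, ← intervalIntegral.integral_of_le (by linarith),
    intervalIntegral.integral_comp_sub_right (· ^ 2), sub_self, add_sub_cancel_left,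
    integral_pow]
  norm_num

lemma lintegral_sin_sq_iUnion_Icc_int_mul_pi_le {a : ℤ → ℝ} (ha : ∀ k, 0 ≤ a k) :
    ∫⁻ x in ⋃ k : ℤ, Icc (k * π) (k * π + a k), ENNReal.ofReal (sin x ^ 2)
      ≤ ∑' k, ENNReal.ofReal (a k ^ 3 / 3) :=
  calc _ ≤ ∑' k : ℤ, ∫⁻ x in Icc (k * π) (k * π + a k), ENNReal.ofReal (sin x ^ 2) :=
        lintegral_iUnion_le _ _
    _ ≤ ∑' k : ℤ, ∫⁻ x in Icc (k * π) (k * π + a k), ENNReal.ofReal ((x - k * π) ^ 2) :=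
        ENNReal.tsum_le_tsum fun k => lintegral_mono fun x =>
          ENNReal.ofReal_le_ofReal (sin_sq_le_sq_sub_int_mul_pi k x)
    _ = ∑' k, ENNReal.ofReal (a k ^ 3 / 3) := by
        simp only [lintegral_Icc_ofReal_sq_sub _ (ha _)]

lemma ofReal_sq_abs_indicator {α : Type*} (s : Set α) (f : α → ℝ) (x : α) :
    ENNReal.ofReal (|s.indicator f x| ^ 2) = s.indicator (fun y => ENNReal.ofReal (f y ^ 2)) x := by
  by_cases hx : x ∈ s <;> simp [hx, sq_abs]

lemma aSeq_nonneg (k : ℤ) : 0 ≤ aSeq k := by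
  unfold aSeq; split <;> positivity

lemma summable_aSeq_pow_three : Summable fun k : ℤ => aSeq k ^ 3 := by
  refine (summable_one_div_int_pow.mpr (by norm_num : 1 < 3)).norm.of_norm_bounded_eventually ?_
  filter_upwards [eventually_cofinite_ne 0] with k hk
  have hk' : (0 : ℝ) < |(k : ℝ)| := by positivity
  rw [aSeq, if_neg hk, Real.norm_eq_abs, Real.norm_eq_abs, abs_of_nonneg (by positivity),
    abs_div, abs_one, abs_pow, div_pow, one_pow]
  gcongr
  linarith

local notation "𝒮" => ⋃ k : ℤ, Icc ((k : ℝ) * π) ((k : ℝ) * π + aSeq k)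

lemma measurableSet_fCtr_support : MeasurableSet 𝒮 :=
  .iUnion fun _ => measurableSet_Icc

lemma fCtr_mul_sin_eq_indicator (x : ℝ) : fCtr x * sin x = (𝒮).indicator sin x := by
  rw [fCtr, ← indicator_mul_left]
  simp only [Pi.one_apply, one_mul]

lemma measurable_fCtr_mul_sin : Measurable fun x => fCtr x * sin x :=
  (measurable_const.indicator measurableSet_fCtr_support).mul measurable_sin

lemma lintegral_ofReal_sq_abs_fCtr_mul_sin_le :
    ∫⁻ x, ENNReal.ofReal (|fCtr x * sin x| ^ 2) ≤ ENNReal.ofReal (1 / 3 * ∑' k, aSeq k ^ 3) :=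
  calc _ = ∫⁻ x in 𝒮, ENNReal.ofReal (sin x ^ 2) := by
        simp only [fCtr_mul_sin_eq_indicator, ofReal_sq_abs_indicator]
        exact lintegral_indicator measurableSet_fCtr_support _
    _ ≤ ∑' k, ENNReal.ofReal (aSeq k ^ 3 / 3) :=
        lintegral_sin_sq_iUnion_Icc_int_mul_pi_le aSeq_nonneg
    _ = ENNReal.ofReal (1 / 3 * ∑' k, aSeq k ^ 3) := by
        rw [← ENNReal.ofReal_tsum_of_nonneg (fun k => by have := aSeq_nonneg k; positivity)
          (summable_aSeq_pow_three.div_const 3), tsum_div_const, one_div_mul_eq_div]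

theorem fCtr_sine_L2 :
    (∫⁻ x : ℝ, ENNReal.ofReal (|fCtr x * Real.sin x| ^ 2))
      ≤ ENNReal.ofReal ((1 / 3) * ∑' k : ℤ, aSeq k ^ 3) ∧
    Summable (fun k : ℤ => aSeq k ^ 3) ∧
    MemLp (fun x => fCtr x * Real.sin x) 2 volume :=
  ⟨lintegral_ofReal_sq_abs_fCtr_mul_sin_le, summable_aSeq_pow_three,
    memLp_two_of_lintegral_sq_abs_ne_top measurable_fCtr_mul_sin.aestronglyMeasurable
      (ne_top_of_le_ne_top ENNReal.ofReal_ne_top lintegral_ofReal_sq_abs_fCtr_mul_sin_le)⟩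
end

section
/- For every 1 ≤ p < ∞ there exists a measurable function f : ℝ → ℝ such that f ∉ Lᵖ(ℝ), f(x)·sin(x) ∈ Lᵖ(ℝ), and f(x + π) − f(x) ∈ Lᵖ(ℝ). -/
open Real MeasureTheory Set Filter
open scoped ENNReal

/-! Let `f` be the indicator of the comb `S = ⋃ₖ [kπ, kπ + aₖ)` with `aₖ = 1 / (|k| + 1)`.
Since `∑ aₖ = ∞`, `S` has infinite measure and `f ∉ Lᵖ`. On the `k`-th interval `|sin x| ≤ aₖ`,
so `∫ |f sin| ≤ ∑ aₖ² < ∞`, and `f sin`, being bounded by `1`, lies in `Lᵖ` for every `p ≥ 1`.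
Finally `f (· + π)` is the indicator of the comb with widths `aₖ₊₁`, which differs from `S` on a
set of measure at most `∑ |aₖ₊₁ - aₖ| < ∞`. -/

section Lp

variable {α E : Type*} [MeasurableSpace α] {μ : Measure α} [NormedAddCommGroup E] {p : ℝ≥0∞}

theorem Integrable.memLp_of_norm_le_one {f : α → E} (hp1 : 1 ≤ p) (hp : p ≠ ∞)
    (hf : Integrable f μ) (hf1 : ∀ᵐ x ∂μ, ‖f x‖ ≤ 1) : MemLp f p μ := by
  have hp0 : p ≠ 0 := (zero_lt_one.trans_le hp1).ne'
  rw [← memLp_norm_rpow_iff hf.aestronglyMeasurable hp0 hp, ENNReal.div_self hp0 hp,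
    memLp_one_iff_integrable]
  refine hf.norm.mono' (hf.norm.aemeasurable.pow_const _).aestronglyMeasurable ?_
  filter_upwards [hf1] with x hx
  rw [norm_of_nonneg (by positivity)]
  exact rpow_le_self_of_le_one (norm_nonneg _) hx (by simpa using ENNReal.toReal_mono hp hp1)

theorem not_memLp_indicator_const {s : Set α} (hs : MeasurableSet s) (hμs : μ s = ∞) {c : E}
    (hc : c ≠ 0) (hp0 : p ≠ 0) (hp : p ≠ ∞) : ¬ MemLp (s.indicator fun _ => c) p μ := by
  intro h
  have := h.eLpNorm_ne_top
  rw [eLpNorm_indicator_const hs hp0 hp, hμs,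
    ENNReal.top_rpow_of_pos (by simp [ENNReal.toReal_pos hp0 hp])] at this
  simp [hc] at this

theorem memLp_indicator_const_sub_indicator_const {s t : Set α} (hs : MeasurableSet s)
    (ht : MeasurableSet t) (hst : μ (s \ t) ≠ ∞) (hts : μ (t \ s) ≠ ∞) (c : E) :
    MemLp (s.indicator (fun _ => c) - t.indicator fun _ => c) p μ := by
  have : s.indicator (fun _ => c) - t.indicator (fun _ => c) =
      (s \ t).indicator (fun _ => c) - (t \ s).indicator fun _ => c := by
    ext x
    by_cases hxs : x ∈ s <;> by_cases hxt : x ∈ t <;> simp [hxs, hxt]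
  rw [this]
  exact (memLp_indicator_const p (hs.diff ht) c (.inr hst)).sub
    (memLp_indicator_const p (ht.diff hs) c (.inr hts))

end Lp

def comb (T : ℝ) (a : ℤ → ℝ) : Set ℝ := ⋃ k : ℤ, Ico (k * T) (k * T + a k)

section Comb

variable {T : ℝ} {a b : ℤ → ℝ}

theorem measurableSet_comb : MeasurableSet (comb T a) :=
  .iUnion fun _ => measurableSet_Ico

theorem preimage_add_comb (T : ℝ) (a : ℤ → ℝ) :
    (· + T) ⁻¹' comb T a = comb T fun k => a (k + 1) := by
  rw [comb, preimage_iUnion, ← (Equiv.addRight (1 : ℤ)).surjective.iUnion_comp]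
  refine iUnion_congr fun k => ?_
  simp only [Equiv.coe_addRight, preimage_add_const_Ico, Int.cast_add, Int.cast_one]
  congr 1 <;> ring

theorem comb_diff_comb_subset :
    comb T a \ comb T b ⊆ ⋃ k : ℤ, Ico (k * T + b k) (k * T + a k) := by
  rintro x ⟨hxa, hxb⟩
  obtain ⟨k, hk⟩ := mem_iUnion.mp hxa
  have hkb : x ∉ Ico (k * T) (k * T + b k) := fun h => hxb (mem_iUnion.mpr ⟨k, h⟩)
  exact mem_iUnion.mpr ⟨k, ⟨not_lt.mp fun h => hkb ⟨hk.1, h⟩, hk.2⟩⟩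

theorem volume_comb_diff_comb_ne_top (h : Summable fun k => |a k - b k|) :
    volume (comb T a \ comb T b) ≠ ∞ := by
  refine ne_top_of_le_ne_top h.tsum_ofReal_ne_top ?_
  calc volume (comb T a \ comb T b)
      ≤ ∑' k : ℤ, volume (Ico (k * T + b k) (k * T + a k)) :=
        (measure_mono comb_diff_comb_subset).trans (measure_iUnion_le _)
    _ ≤ ∑' k : ℤ, ENNReal.ofReal |a k - b k| := by
        refine ENNReal.tsum_le_tsum fun k => ?_
        rw [volume_Ico, add_sub_add_left_eq_sub]
        exact ENNReal.ofReal_le_ofReal (le_abs_self _)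

theorem volume_comb (haT : ∀ k, a k ≤ T) : volume (comb T a) = ∑' k, ENNReal.ofReal (a k) := by
  have hdisj : Pairwise (Function.onFun Disjoint fun k : ℤ => Ico (k * T) (k * T + a k)) := by
    refine (pairwise_disjoint_Ico_add_zsmul 0 T).mono fun j k h => h.mono ?_ ?_ <;>
      exact Ico_subset_Ico (by simp) (by simp [add_mul, haT])
  rw [comb, measure_iUnion hdisj fun _ => measurableSet_Ico]
  simp_rw [volume_Ico, add_sub_cancel_left]

theorem abs_sin_le_of_mem_Ico {x c : ℝ} {k : ℤ} (hx : x ∈ Ico (k * π) (k * π + c)) :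
    |sin x| ≤ c := by
  calc |sin x| = |sin (x - k * π)| := by
        rw [sin_sub_int_mul_pi, abs_mul, abs_neg_one_zpow, one_mul]
    _ ≤ |x - k * π| := abs_sin_le_abs
    _ ≤ c := by rw [abs_of_nonneg (by linarith [hx.1])]; linarith [hx.2]

theorem setLIntegral_enorm_sin_comb_le (ha : ∀ k, 0 ≤ a k) :
    ∫⁻ x in comb π a, ‖sin x‖ₑ ≤ ∑' k, ENNReal.ofReal (a k ^ 2) := by
  refine (lintegral_iUnion_le _ _).trans (ENNReal.tsum_le_tsum fun k => ?_)
  calc ∫⁻ x in Ico (k * π) (k * π + a k), ‖sin x‖ₑ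
      ≤ ∫⁻ _ in Ico (k * π) (k * π + a k), ENNReal.ofReal (a k) :=
        setLIntegral_mono measurable_const fun x hx => by
          rw [← ofReal_norm]; exact ENNReal.ofReal_le_ofReal (abs_sin_le_of_mem_Ico hx)
    _ = ENNReal.ofReal (a k ^ 2) := by
        rw [setLIntegral_const, volume_Ico, add_sub_cancel_left, ← ENNReal.ofReal_mul (ha k), sq]

theorem integrableOn_sin_comb (ha : ∀ k, 0 ≤ a k) (hsq : Summable fun k => a k ^ 2) :
    IntegrableOn sin (comb π a) :=
  ⟨continuous_sin.aestronglyMeasurable,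
    (setLIntegral_enorm_sin_comb_le ha).trans_lt hsq.tsum_ofReal_lt_top⟩

theorem volume_comb_eq_top (ha0 : ∀ k, 0 ≤ a k) (haT : ∀ k, a k ≤ T) (ha : ¬ Summable a) :
    volume (comb T a) = ∞ := by
  rw [volume_comb haT]
  by_contra h
  exact ha ((ENNReal.summable_toReal h).congr fun k => ENNReal.toReal_ofReal (ha0 k))

end Comb

noncomputable def width (k : ℤ) : ℝ := (|(k : ℝ)| + 1)⁻¹

theorem width_nonneg (k : ℤ) : 0 ≤ width k := by unfold width; positivity

theorem width_le_one (k : ℤ) : width k ≤ 1 :=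
  inv_le_one_of_one_le₀ (le_add_of_nonneg_left (abs_nonneg _))

theorem not_summable_width : ¬ Summable width := by
  intro h
  refine Real.not_summable_one_div_natCast ((summable_nat_add_iff 1).mp ?_)
  refine (h.comp_injective Nat.cast_injective).congr fun n => ?_
  simp [width, abs_of_nonneg (Nat.cast_nonneg (α := ℝ) n)]

theorem summable_width_sq : Summable fun k => width k ^ 2 := by
  refine (summable_one_div_int_pow.mpr one_lt_two).of_norm_bounded_eventually ?_
  filter_upwards [eventually_cofinite_ne 0] with k hk
  have hk' : (0 : ℝ) < |(k : ℝ)| := by positivity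
  rw [norm_of_nonneg (by positivity), width, inv_pow, one_div, ← sq_abs (k : ℝ)]
  exact inv_anti₀ (by positivity) (pow_le_pow_left₀ hk'.le (by linarith) 2)

theorem summable_abs_width_add_one_sub : Summable fun k => |width (k + 1) - width k| := by
  refine (summable_one_div_int_pow.mpr one_lt_two).of_norm_bounded_eventually ?_
  filter_upwards [eventually_cofinite_ne 0] with k hk
  set u := |(k : ℝ)| + 1
  set v := |((k + 1 : ℤ) : ℝ)| + 1
  have huv : |v - u| ≤ 1 := by
    simpa [u, v] using abs_abs_sub_abs_le_abs_sub ((k : ℝ) + 1) k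
  have hu : |(k : ℝ)| ≤ u := by simp [u]
  have hv : |(k : ℝ)| ≤ v := by linarith [(abs_le.mp huv).1]
  have hu0 : 0 < u := by positivity
  have hv0 : 0 < v := by positivity
  rw [norm_abs_eq_norm, norm_eq_abs, width, width, inv_sub_inv hv0.ne' hu0.ne', abs_div,
    abs_of_pos (mul_pos hv0 hu0), ← sq_abs (k : ℝ),
    div_le_div_iff₀ (mul_pos hv0 hu0) (by positivity), one_mul, sq, abs_sub_comm]
  calc |v - u| * (|(k : ℝ)| * |(k : ℝ)|) ≤ 1 * (v * u) :=
        mul_le_mul huv (mul_le_mul hv hu (abs_nonneg _) hv0.le) (by positivity) zero_le_one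
    _ = v * u := one_mul _

theorem exists_bad_function_Lp (p : ℝ) (hp : 1 ≤ p) :
    ∃ f : ℝ → ℝ, Measurable f ∧
      ¬ MemLp f (ENNReal.ofReal p) volume ∧
      MemLp (fun x => f x * Real.sin x) (ENNReal.ofReal p) volume ∧
      MemLp (fun x => f (x + π) - f x) (ENNReal.ofReal p) volume := by
  set S := comb π width
  have hS : MeasurableSet S := measurableSet_comb
  have hp0 : ENNReal.ofReal p ≠ 0 := (ENNReal.ofReal_pos.mpr (by linarith)).ne'
  refine ⟨S.indicator fun _ => 1, measurable_const.indicator hS, ?_, ?_, ?_⟩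
  · have hwidth : ∀ k, width k ≤ π := fun k => (width_le_one k).trans (by linarith [pi_gt_three])
    exact not_memLp_indicator_const hS (volume_comb_eq_top width_nonneg hwidth not_summable_width)
      one_ne_zero hp0 ENNReal.ofReal_ne_top
  · have hmul : (fun x => S.indicator (fun _ => (1 : ℝ)) x * sin x) = S.indicator sin := by
      ext x; by_cases hx : x ∈ S <;> simp [hx]
    rw [hmul, memLp_indicator_iff_restrict hS]
    exact Integrable.memLp_of_norm_le_one (ENNReal.one_le_ofReal.mpr hp) ENNReal.ofReal_ne_top
      (integrableOn_sin_comb width_nonneg summable_width_sq) (ae_of_all _ abs_sin_le_one)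
  · have hshift :
        (fun x => S.indicator (fun _ => (1 : ℝ)) (x + π) - S.indicator (fun _ => 1) x) =
          (comb π fun k => width (k + 1)).indicator (fun _ => 1) - S.indicator fun _ => 1 := by
      ext x; rw [← preimage_add_comb]; rfl
    have hsum' : Summable fun k => |width k - width (k + 1)| := by
      simpa only [abs_sub_comm] using summable_abs_width_add_one_sub
    rw [hshift]
    exact memLp_indicator_const_sub_indicator_const measurableSet_comb hS
      (volume_comb_diff_comb_ne_top summable_abs_width_add_one_sub)
      (volume_comb_diff_comb_ne_top hsum') 1
end

section
/- Let 1 ≤ p < ∞ and let t, s be real numbers. Then the implication [for all measurable f : ℝ → ℝ, (f(·+t) − f(·) ∈ Lᵖ(ℝ) and sin(s·)·f(·) ∈ Lᵖ(ℝ)) implies f ∈ Lᵖ(ℝ)] holds if and only if t·s ∉ πℤ. -/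
/-!
If `sin (s t) ≠ 0`, the identity
`sin (s t) f(x) = cos (s x) sin (s (x + t)) f(x) - cos (s (x + t)) sin (s x) f(x)`,
with `sin (s (x + t)) f(x) = sin (s (x + t)) f(x + t) - sin (s (x + t)) (f(x + t) - f(x))`,
writes `f` as bounded multiples of `Lᵖ` functions.

If `s t ∈ πℤ` and `s ≠ 0`, put `δ = π / |s|` and let `f` be the indicator of the comb
`⋃ₙ (nδ, nδ + δ/(n+1)]`. Its measure is a harmonic series, so `f ∉ Lᵖ`. Translating by `δ`
changes it on a set of measure `δ + ∑ δ/((n+1)(n+2)) < ∞`, and the translation lengths `t` with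
`f(· + t) - f ∈ Lᵖ` form a group, which therefore contains `t ∈ δℤ`. On the `n`-th tooth
`|sin (s x)| ≤ π/(n+1)`, so `∫ |sin (s x) f(x)|ᵖ ≤ ∑ (π/(n+1))ᵖ δ/(n+1) < ∞`.
For `s = 0` the constant `1` is a counterexample.
-/

open Real MeasureTheory Set
open scoped ENNReal symmDiff

namespace MeasureTheory

section QuasiPeriods

variable {G E : Type*} [AddGroup G] [MeasurableSpace G] [MeasurableAdd G] [NormedAddCommGroup E]

def lpQuasiPeriods (f : G → E) (p : ℝ≥0∞) (μ : Measure G) [μ.IsAddRightInvariant] :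
    AddSubgroup G where
  carrier := {t | MemLp (fun x => f (x + t) - f x) p μ}
  zero_mem' := by simp [MemLp.zero']
  add_mem' {a b} ha hb := by
    show MemLp _ p μ
    convert (hb.comp_measurePreserving (measurePreserving_add_right μ a)).add ha using 1
    ext x
    simp [add_assoc]
  neg_mem' {a} ha := by
    show MemLp _ p μ
    convert (ha.comp_measurePreserving (measurePreserving_add_right μ (-a))).neg using 1
    ext x
    simp

theorem mem_lpQuasiPeriods {f : G → E} {p : ℝ≥0∞} {μ : Measure G} [μ.IsAddRightInvariant]
    {t : G} : t ∈ lpQuasiPeriods f p μ ↔ MemLp (fun x => f (x + t) - f x) p μ :=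
  Iff.rfl

end QuasiPeriods

variable {α E : Type*} [MeasurableSpace α] {μ : Measure α} [NormedAddCommGroup E]
  [NormedSpace ℝ E] {p : ℝ≥0∞} {f : α → E} {φ : α → ℝ}

theorem MemLp.sin_smul (hf : MemLp f p μ) (hφ : AEStronglyMeasurable φ μ) :
    MemLp (fun x => sin (φ x) • f x) p μ :=
  hf.smul (memLp_top_of_bound (continuous_sin.comp_aestronglyMeasurable hφ) 1
    (ae_of_all _ fun x => by simpa using abs_sin_le_one (φ x)))

theorem MemLp.cos_smul (hf : MemLp f p μ) (hφ : AEStronglyMeasurable φ μ) :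
    MemLp (fun x => cos (φ x) • f x) p μ :=
  hf.smul (memLp_top_of_bound (continuous_cos.comp_aestronglyMeasurable hφ) 1
    (ae_of_all _ fun x => by simpa using abs_cos_le_one (φ x)))

end MeasureTheory

theorem memLp_of_memLp_sub_translate_of_memLp_sin_smul {E : Type*} [NormedAddCommGroup E]
    [NormedSpace ℝ E] {p : ℝ≥0∞} {f : ℝ → E} {s t : ℝ} (hst : sin (s * t) ≠ 0)
    (hdiff : MemLp (fun x => f (x + t) - f x) p volume)
    (hsin : MemLp (fun x => sin (s * x) • f x) p volume) : MemLp f p volume := by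
  have hsin_t : MemLp (fun x => sin (s * (x + t)) • f (x + t)) p volume :=
    hsin.comp_measurePreserving (measurePreserving_add_right volume t)
  have key (x : ℝ) : sin (s * t) • f x = cos (s * x) • (sin (s * (x + t)) • f (x + t) -
      sin (s * (x + t)) • (f (x + t) - f x)) - cos (s * (x + t)) • sin (s * x) • f x := by
    rw [show s * t = s * (x + t) - s * x by ring, sin_sub]
    module
  have hrhs : MemLp (fun x => cos (s * x) • (sin (s * (x + t)) • f (x + t) -
      sin (s * (x + t)) • (f (x + t) - f x)) - cos (s * (x + t)) • sin (s * x) • f x) p volume :=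
    ((hsin_t.sub (hdiff.sin_smul (by fun_prop))).cos_smul (by fun_prop)).sub
      (hsin.cos_smul (by fun_prop))
  convert hrhs.const_smul (sin (s * t))⁻¹ using 1
  ext x
  rw [Pi.smul_apply, ← key, inv_smul_smul₀ hst]

theorem abs_sin_le_abs_sub_of_sin_eq_zero {a b : ℝ} (ha : sin a = 0) : |sin b| ≤ |b - a| := by
  have hb : sin b = sin (b - a) * cos a := by
    conv_lhs => rw [← sub_add_cancel b a]
    rw [sin_add, ha, mul_zero, add_zero]
  calc |sin b| = |sin (b - a)| * |cos a| := by rw [hb, abs_mul]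
    _ ≤ |sin (b - a)| * 1 := by gcongr; exact abs_cos_le_one a
    _ ≤ |b - a| := by rw [mul_one]; exact abs_sin_le_abs

theorem not_summable_div_nat_succ {c : ℝ} (hc : c ≠ 0) :
    ¬ Summable fun n : ℕ => c / (n + 1) := by
  simp_rw [div_eq_mul_one_div c, summable_mul_left_iff hc]
  exact_mod_cast mt (summable_nat_add_iff 1).1 Real.not_summable_one_div_natCast

theorem summable_div_nat_succ_rpow_mul {q a : ℝ} (hq : 0 < q) (ha : 0 ≤ a) (b : ℝ) :
    Summable fun n : ℕ => (a / (n + 1)) ^ q * (b / (n + 1)) := by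
  have h := ((Real.summable_one_div_nat_add_rpow 1 (q + 1)).2 (by linarith)).mul_left (a ^ q * b)
  refine h.congr fun n => ?_
  have hn : (0 : ℝ) < n + 1 := by positivity
  rw [abs_of_pos hn, Real.rpow_add_one hn.ne', Real.div_rpow ha hn.le]
  field_simp

theorem volume_Ioc_symmDiff_Ioc_of_le {a u v : ℝ} (hu : 0 ≤ u) (huv : u ≤ v) :
    volume (Ioc a (a + u) ∆ Ioc a (a + v)) = ENNReal.ofReal (v - u) := by
  have hsub : Ioc a (a + u) ⊆ Ioc a (a + v) := Ioc_subset_Ioc_right (by linarith)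
  rw [symmDiff_of_le hsub, measure_sdiff hsub measurableSet_Ioc.nullMeasurableSet
    measure_Ioc_lt_top.ne, Real.volume_Ioc, Real.volume_Ioc, add_sub_cancel_left,
    add_sub_cancel_left, ← ENNReal.ofReal_sub _ hu]

section HarmonicComb

def harmonicComb (δ : ℝ) : Set ℝ := ⋃ n : ℕ, Ioc (n * δ) (n * δ + δ / (n + 1))

variable {δ : ℝ}

theorem measurableSet_harmonicComb : MeasurableSet (harmonicComb δ) :=
  .iUnion fun _ => measurableSet_Ioc

theorem volume_harmonicComb (hδ : 0 < δ) : volume (harmonicComb δ) = ∞ := by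
  have hdisj : Pairwise (Function.onFun Disjoint
      fun n : ℕ => Ioc (n * δ) (n * δ + δ / (n + 1))) := by
    refine fun m n hmn => ((Monotone.pairwise_disjoint_on_Ioc_succ (f := fun n : ℕ => n * δ)
      fun a b hab => by dsimp only; gcongr) hmn).mono (Ioc_subset_Ioc_right ?_)
      (Ioc_subset_Ioc_right ?_)
    all_goals
      simp only [Order.succ_eq_add_one, Nat.cast_add, Nat.cast_one, add_mul, one_mul]
      gcongr
      exact div_le_self hδ.le (by linarith [Nat.cast_nonneg (α := ℝ) m, Nat.cast_nonneg (α := ℝ) n])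
  rw [harmonicComb, measure_iUnion hdisj fun _ => measurableSet_Ioc]
  simp_rw [Real.volume_Ioc, add_sub_cancel_left]
  by_contra h
  refine not_summable_div_nat_succ hδ.ne' ((ENNReal.summable_toReal h).congr fun n => ?_)
  exact ENNReal.toReal_ofReal (by positivity)

theorem not_memLp_indicator_harmonicComb {p : ℝ≥0∞} (hp0 : p ≠ 0) (hp : p ≠ ∞) (hδ : 0 < δ) :
    ¬ MemLp ((harmonicComb δ).indicator (1 : ℝ → ℝ)) p volume := by
  intro h
  have := h.eLpNorm_lt_top
  rw [Pi.one_def, eLpNorm_indicator_const measurableSet_harmonicComb hp0 hp,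
    volume_harmonicComb hδ, ENNReal.top_rpow_of_pos (by simp [ENNReal.toReal_pos hp0 hp])] at this
  simp at this

theorem memLp_sin_mul_indicator_harmonicComb {p : ℝ≥0∞} (hp0 : p ≠ 0) (hp : p ≠ ∞) {s : ℝ}
    (hδ : 0 ≤ δ) (hsδ : sin (s * δ) = 0) :
    MemLp (fun x => sin (s * x) * (harmonicComb δ).indicator 1 x) p volume := by
  set q := p.toReal
  have hq : 0 < q := ENNReal.toReal_pos hp0 hp
  have hsin_small (n : ℕ) (x : ℝ) (hx : x ∈ Ioc (n * δ) (n * δ + δ / (n + 1))) :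
      ‖sin (s * x)‖ₑ ≤ ENNReal.ofReal (|s| * δ / (n + 1)) := by
    obtain ⟨m, hm⟩ := sin_eq_zero_iff.1 hsδ
    have hzero : sin (s * (n * δ)) = 0 :=
      sin_eq_zero_iff.2 ⟨n * m, by push_cast; rw [mul_assoc, hm]; ring⟩
    rw [Real.enorm_eq_ofReal_abs]
    apply ENNReal.ofReal_le_ofReal
    calc |sin (s * x)| ≤ |s * x - s * (n * δ)| := abs_sin_le_abs_sub_of_sin_eq_zero hzero
      _ = |s| * (x - n * δ) := by rw [← mul_sub, abs_mul, abs_of_pos (sub_pos.2 hx.1)]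
      _ ≤ |s| * (δ / (n + 1)) := by gcongr; linarith [hx.2]
      _ = |s| * δ / (n + 1) := (mul_div_assoc ..).symm
  refine ⟨(continuous_sin.comp (continuous_const_mul s)).aestronglyMeasurable.mul
    (measurable_const.indicator measurableSet_harmonicComb).aestronglyMeasurable, ?_⟩
  rw [eLpNorm_lt_top_iff_lintegral_rpow_enorm_lt_top hp0 hp]
  calc ∫⁻ x, ‖sin (s * x) * (harmonicComb δ).indicator 1 x‖ₑ ^ q
      = ∫⁻ x in harmonicComb δ, ‖sin (s * x)‖ₑ ^ q := by
        rw [← lintegral_indicator measurableSet_harmonicComb]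
        congr 1
        ext x
        by_cases hx : x ∈ harmonicComb δ <;> simp [hx, hq]
    _ ≤ ∑' n : ℕ, ∫⁻ x in Ioc (n * δ) (n * δ + δ / (n + 1)), ‖sin (s * x)‖ₑ ^ q :=
        lintegral_iUnion_le _ _
    _ ≤ ∑' n : ℕ, ENNReal.ofReal ((|s| * δ / (n + 1)) ^ q * (δ / (n + 1))) := by
        gcongr with n
        calc _ ≤ ∫⁻ x in Ioc (n * δ) (n * δ + δ / (n + 1)),
                ENNReal.ofReal (|s| * δ / (n + 1)) ^ q :=
              setLIntegral_mono measurable_const fun x hx => by gcongr; exact hsin_small n x hx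
          _ = _ := by
              rw [setLIntegral_const, Real.volume_Ioc, add_sub_cancel_left,
                ENNReal.ofReal_rpow_of_nonneg (by positivity) hq.le,
                ← ENNReal.ofReal_mul (by positivity)]
    _ = ENNReal.ofReal (∑' n : ℕ, (|s| * δ / (n + 1)) ^ q * (δ / (n + 1))) :=
        (ENNReal.ofReal_tsum_of_nonneg (fun n => by positivity)
          (summable_div_nat_succ_rpow_mul hq (by positivity) _)).symm
    _ < ∞ := ENNReal.ofReal_lt_top

theorem preimage_add_harmonicComb :
    (· + δ) ⁻¹' harmonicComb δ = Ioc (-δ) 0 ∪ ⋃ n : ℕ, Ioc (n * δ) (n * δ + δ / (n + 2)) := by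
  rw [harmonicComb, preimage_iUnion, ← union_iUnion_nat_succ]
  simp only [preimage_add_const_Ioc]
  congr 1
  · simp
  · congr! 2 with n
    congr 1 <;> push_cast <;> ring

theorem volume_preimage_add_symmDiff_harmonicComb_lt_top (hδ : 0 ≤ δ) :
    volume (((· + δ) ⁻¹' harmonicComb δ) ∆ harmonicComb δ) < ∞ := by
  have hsub : ((· + δ) ⁻¹' harmonicComb δ) ∆ harmonicComb δ ⊆ Ioc (-δ) 0 ∪
      ⋃ n : ℕ, Ioc (n * δ) (n * δ + δ / (n + 2)) ∆ Ioc (n * δ) (n * δ + δ / (n + 1)) := by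
    rw [preimage_add_harmonicComb]
    refine subset_trans (symmDiff_triangle _ (⋃ n : ℕ, Ioc (n * δ) (n * δ + δ / (n + 2))) _)
      (union_subset_union ?_ iUnion_symmDiff_iUnion_subset)
    rw [symmDiff_of_ge (subset_union_right (s := Ioc (-δ) 0)), union_sdiff_right]
    exact sdiff_subset
  have hwidths (n : ℕ) : δ / (n + 2) ≤ δ / (n + 1) := by gcongr; linarith
  refine (measure_mono hsub).trans_lt <| (measure_union_le _ _).trans_lt <|
    ENNReal.add_lt_top.2 ⟨measure_Ioc_lt_top, (measure_iUnion_le _).trans_lt ?_⟩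
  calc ∑' n : ℕ, volume (Ioc (n * δ) (n * δ + δ / (n + 2)) ∆ Ioc (n * δ) (n * δ + δ / (n + 1)))
      = ∑' n : ℕ, ENNReal.ofReal (δ / (n + 1) - δ / (n + 2)) := by
        congr 1 with n
        exact volume_Ioc_symmDiff_Ioc_of_le (by positivity) (hwidths n)
    _ ≤ ∑' n : ℕ, ENNReal.ofReal ((δ / (n + 1)) ^ (1 : ℝ) * (1 / (n + 1))) := by
        gcongr with n
        calc δ / (n + 1) - δ / (n + 2) = δ / ((n + 1) * (n + 2)) := by field_simp; ring
          _ ≤ δ / ((n + 1) * (n + 1)) := by gcongr; linarith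
          _ = (δ / (n + 1)) ^ (1 : ℝ) * (1 / (n + 1)) := by rw [Real.rpow_one]; field_simp
    _ = ENNReal.ofReal (∑' n : ℕ, (δ / (n + 1)) ^ (1 : ℝ) * (1 / (n + 1))) :=
        (ENNReal.ofReal_tsum_of_nonneg (fun n => by positivity)
          (summable_div_nat_succ_rpow_mul one_pos (by positivity) _)).symm
    _ < ∞ := ENNReal.ofReal_lt_top

theorem mem_lpQuasiPeriods_harmonicComb (p : ℝ≥0∞) (hδ : 0 ≤ δ) :
    δ ∈ lpQuasiPeriods ((harmonicComb δ).indicator (1 : ℝ → ℝ)) p volume := by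
  have hmeas : MeasurableSet ((· + δ) ⁻¹' harmonicComb δ) :=
    measurableSet_harmonicComb.preimage (measurable_add_const δ)
  have hdiff : (fun x => (harmonicComb δ).indicator (1 : ℝ → ℝ) (x + δ) -
      (harmonicComb δ).indicator 1 x) =
      ((· + δ) ⁻¹' harmonicComb δ).indicator 1 - (harmonicComb δ).indicator 1 :=
    rfl
  rw [mem_lpQuasiPeriods, hdiff]
  refine ⟨((measurable_const.indicator hmeas).sub
    (measurable_const.indicator measurableSet_harmonicComb)).aestronglyMeasurable, ?_⟩
  rw [eLpNorm_indicator_sub_indicator]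
  exact (memLp_indicator_const p (hmeas.symmDiff measurableSet_harmonicComb) (1 : ℝ)
    (Or.inr (volume_preimage_add_symmDiff_harmonicComb_lt_top hδ).ne)).eLpNorm_lt_top

end HarmonicComb

theorem exists_not_memLp_of_sin_mul_eq_zero {p : ℝ≥0∞} (hp0 : p ≠ 0) (hp : p ≠ ∞)
    {s δ t : ℝ} (hδ : 0 < δ) (hsδ : sin (s * δ) = 0) (ht : t ∈ AddSubgroup.zmultiples δ) :
    ∃ f : ℝ → ℝ, Measurable f ∧ MemLp (fun x => f (x + t) - f x) p volume ∧
      MemLp (fun x => sin (s * x) * f x) p volume ∧ ¬ MemLp f p volume :=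
  ⟨(harmonicComb δ).indicator 1, measurable_const.indicator measurableSet_harmonicComb,
    AddSubgroup.zmultiples_le.2 (mem_lpQuasiPeriods_harmonicComb p hδ.le) ht,
    memLp_sin_mul_indicator_harmonicComb hp0 hp hδ.le hsδ,
    not_memLp_indicator_harmonicComb hp0 hp hδ⟩

theorem assertive_iff_not_multiple_of_pi (p : ℝ) (hp : 1 ≤ p) (t s : ℝ) :
    (∀ f : ℝ → ℝ, Measurable f →
        MemLp (fun x => f (x + t) - f x) (ENNReal.ofReal p) volume →
        MemLp (fun x => Real.sin (s * x) * f x) (ENNReal.ofReal p) volume →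
        MemLp f (ENNReal.ofReal p) volume) ↔
      ∀ k : ℤ, t * s ≠ k * π := by
  have hp0 : ENNReal.ofReal p ≠ 0 := by simp; linarith
  refine ⟨fun H k hk => ?_, fun hts f _ hdiff hsin => ?_⟩
  · rcases eq_or_ne s 0 with rfl | hs
    · have h1 := H (fun _ => 1) measurable_const (by simp) (by simp)
      rw [memLp_const_iff hp0 ENNReal.ofReal_ne_top] at h1
      simp at h1
    set δ := π / |s|
    have hsδ : sin (s * δ) = 0 := by
      rcases abs_choice s with h | h <;> simp [δ, h, div_neg, mul_div_cancel₀ _ hs]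
    have ht : t ∈ AddSubgroup.zmultiples δ := by
      rcases abs_choice s with h | h
      · exact ⟨k, by simp only [δ, h, zsmul_eq_mul]; field_simp; linarith⟩
      · exact ⟨-k, by simp only [δ, h, zsmul_eq_mul, Int.cast_neg]; field_simp; linarith⟩
    obtain ⟨f, hf, hdiff, hsin, hnot⟩ :=
      exists_not_memLp_of_sin_mul_eq_zero hp0 ENNReal.ofReal_ne_top (by positivity) hsδ ht
    exact hnot (H f hf hdiff hsin)
  · refine memLp_of_memLp_sub_translate_of_memLp_sin_smul (s := s) (t := t) ?_ hdiff hsin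
    rw [Ne, sin_eq_zero_iff]
    rintro ⟨k, hk⟩
    exact hts k (by linarith)
end

section
/- Let F : ℝⁿ → ℝ be measurable, 1 ≤ p < ∞, and suppose F(x)·sin(x_j) ∈ Lᵖ(ℝⁿ) for each 1 ≤ j ≤ n. Then F(x)·sin(⟨b,x⟩) ∈ Lᵖ(ℝⁿ) for every b ∈ ℤⁿ. -/
/-!
The phases `g` for which `F * sin g` lies in `Lᵖ` form an additive group: `sin (-g) = -sin g`,
and `sin (A + B) = sin A cos B + cos A sin B` with `|cos| ≤ 1`. Since `⟨b, x⟩` is an integer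
combination of the coordinates `x j`, it is such a phase.
-/

open Real MeasureTheory

namespace MeasureTheory

variable {α : Type*} {m : MeasurableSpace α} {μ : Measure α} {p : ENNReal}

theorem memLp_top_cos {g : α → ℝ} (hg : AEStronglyMeasurable g μ) :
    MemLp (fun x => cos (g x)) ⊤ μ :=
  memLp_top_of_bound (continuous_cos.comp_aestronglyMeasurable hg) 1
    (.of_forall fun x => by simpa using abs_cos_le_one (g x))

theorem MemLp.mul_cos_s14 {f g : α → ℝ} (hf : MemLp f p μ) (hg : AEStronglyMeasurable g μ) :
    MemLp (fun x => f x * cos (g x)) p μ := by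
  simpa only [mul_comm] using hf.mul' (memLp_top_cos hg)

theorem MemLp.mul_sin_add {F A B : α → ℝ} (hA : AEStronglyMeasurable A μ)
    (hB : AEStronglyMeasurable B μ) (hFA : MemLp (fun x => F x * sin (A x)) p μ)
    (hFB : MemLp (fun x => F x * sin (B x)) p μ) :
    MemLp (fun x => F x * sin (A x + B x)) p μ := by
  convert (hFA.mul_cos_s14 hB).add (hFB.mul_cos_s14 hA) using 1
  ext x
  simp only [Pi.add_apply, sin_add]
  ring

def sinPhaseSubgroup (F : α → ℝ) (p : ENNReal) (μ : Measure α) : AddSubgroup (α → ℝ) where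
  carrier := {g | AEStronglyMeasurable g μ ∧ MemLp (fun x => F x * sin (g x)) p μ}
  zero_mem' := ⟨aestronglyMeasurable_const, by simp⟩
  add_mem' := fun ⟨hA, hFA⟩ ⟨hB, hFB⟩ => ⟨hA.add hB, hFA.mul_sin_add hA hB hFB⟩
  neg_mem' := fun ⟨hA, hFA⟩ => ⟨hA.neg, by simpa [sin_neg, Pi.neg_def] using hFA.neg⟩

theorem intLinearForm_mem_sinPhaseSubgroup {n : ℕ} {F : (Fin n → ℝ) → ℝ}
    {μ : Measure (Fin n → ℝ)} (h : ∀ j, MemLp (fun x => F x * sin (x j)) p μ) (b : Fin n → ℤ) :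
    (fun x => ∑ j, (b j : ℝ) * x j) ∈ sinPhaseSubgroup F p μ := by
  have hcoord (j : Fin n) : (fun x : Fin n → ℝ => x j) ∈ sinPhaseSubgroup F p μ :=
    ⟨(measurable_pi_apply j).aestronglyMeasurable, h j⟩
  have hform : (fun x : Fin n → ℝ => ∑ j, (b j : ℝ) * x j) = ∑ j, b j • fun x => x j := by
    ext x
    simp [Finset.sum_apply, zsmul_eq_mul]
  rw [hform]
  exact AddSubgroup.sum_mem _ fun j _ => AddSubgroup.zsmul_mem _ (hcoord j) _

end MeasureTheory

theorem sine_inner_Lp_general (n : ℕ) (p : ℝ)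
    (F : (Fin n → ℝ) → ℝ)
    (h : ∀ j : Fin n, MemLp (fun x => F x * Real.sin (x j)) (ENNReal.ofReal p) volume) :
    ∀ b : Fin n → ℤ,
      MemLp (fun x => F x * Real.sin (∑ j, (b j : ℝ) * x j)) (ENNReal.ofReal p) volume :=
  fun b => (intLinearForm_mem_sinPhaseSubgroup h b).2

theorem sine_inner_Lp (n : ℕ) (p : ℝ) (hp : 1 ≤ p)
    (F : (Fin n → ℝ) → ℝ) (hF : Measurable F)
    (h : ∀ j : Fin n, MemLp (fun x => F x * Real.sin (x j)) (ENNReal.ofReal p) volume) :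
    ∀ b : Fin n → ℤ,
      MemLp (fun x => F x * Real.sin (∑ j, (b j : ℝ) * x j)) (ENNReal.ofReal p) volume :=
  sine_inner_Lp_general n p F h
end
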